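/- Let r = Σ_i s_i ⊗ t_i = f⊗e + e⊗f − 2k⊗k ∈ sl₂ ⊗ sl₂ and ω(k,e) = −ω(e,k) = x ∈ F₀ (zero on other basis pairs). Consider P = Σ_{i,j} ( − s̄_i ⊗ ω(s_j,t_i) ⊗ t̄_j − s̄_i ⊗ s̄_j ⊗ ω(t_j,t_i) ) + Σ_i ( s̄_i ⊗ 1 ⊗ t̄_i + s̄_i ⊗ t̄_i ⊗ 1 ) + c ⊗ r̄, an element of a triple tensor product of the spaces F₁⋊_α sl₂ and F₀, where c ∈ ℂ·1 ⊂ F₀ and r̄ = Σ_i s̄_i ⊗ t̄_i. Then P₁₂₃ + P₂₃₁ + P₃₁₂ = 0 (sum over the cyclic permutations of tensor factors) if and only if c = −2·1. -/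

import Mathlib

open Polynomial
open scoped TensorProduct

namespace Stmt19

/-- The basis `e, f, k` of `sl₂(ℂ)` (matrix model). -/
noncomputable def eMat : Matrix (Fin 2) (Fin 2) ℂ := !![0, 0; 1, 0]
noncomputable def fMat : Matrix (Fin 2) (Fin 2) ℂ := !![0, -1; 0, 0]
noncomputable def kMat : Matrix (Fin 2) (Fin 2) ℂ := !![-(1/2 : ℂ), 0; 0, 1/2]

/-- The tensor factors `s_i, t_i` and coefficients of
`r = f⊗e + e⊗f − 2k⊗k = Σ_i co_i · s_i ⊗ t_i`. -/
noncomputable def s : Fin 3 → Matrix (Fin 2) (Fin 2) ℂ := ![fMat, eMat, kMat]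
noncomputable def t : Fin 3 → Matrix (Fin 2) (Fin 2) ℂ := ![eMat, fMat, kMat]
noncomputable def co : Fin 3 → ℂ := ![1, 1, -2]

/-- The map `ω : Λ²sl₂ → F₀` with `ω(k,e) = −ω(e,k) = x`, zero on the other
basis pairs. -/
noncomputable def w (A B : Matrix (Fin 2) (Fin 2) ℂ) : Polynomial ℂ :=
  C (2 * A 1 1 * B 1 0 - 2 * A 1 0 * B 1 1) * X

/-- The common ambient space `V = F₀ ⊕ (F₁ ⋊_α sl₂)` containing both `F₀`
and `F₁ ⋊_α sl₂` (the latter modelled as pairs `(1-form, sl₂-matrix)`). -/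
abbrev V := Polynomial ℂ × (Polynomial ℂ × Matrix (Fin 2) (Fin 2) ℂ)

/-- The embedding of `F₀` into `V`. -/
noncomputable def f0 (p : Polynomial ℂ) : V := (p, 0)

/-- The embedding `X ↦ X̄ = (0,X)` of `sl₂` into `F₁ ⋊_α sl₂ ⊂ V`. -/
noncomputable def gbar (A : Matrix (Fin 2) (Fin 2) ℂ) : V := (0, (0, A))

/-- The element `P = Σ_{i,j}(−s̄_i ⊗ ω(s_j,t_i) ⊗ t̄_j − s̄_i ⊗ s̄_j ⊗ ω(t_j,t_i))
+ Σ_i (s̄_i ⊗ 1 ⊗ t̄_i + s̄_i ⊗ t̄_i ⊗ 1) + c ⊗ r̄`, written with an arbitrary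
placement `ins` of the three tensor slots (so that the cyclic permutations
`P₁₂₃`, `P₂₃₁`, `P₃₁₂` are obtained by permuting the slots). -/
noncomputable def P (c : Polynomial ℂ) (ins : V → V → V → V ⊗[ℂ] (V ⊗[ℂ] V)) :
    V ⊗[ℂ] (V ⊗[ℂ] V) :=
  (∑ i : Fin 3, ∑ j : Fin 3, (co i * co j) •
      (- ins (gbar (s i)) (f0 (w (s j) (t i))) (gbar (t j))
       - ins (gbar (s i)) (gbar (s j)) (f0 (w (t j) (t i)))))
  + ∑ i : Fin 3, co i •
      (ins (gbar (s i)) (f0 1) (gbar (t i))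
       + ins (gbar (s i)) (gbar (t i)) (f0 1)
       + ins (f0 c) (gbar (s i)) (gbar (t i)))

/-!
The ω-terms of `P` cancel in the cyclic sum: ω vanishes except on the pair `{k, e}`, and the
surviving terms `2 (f̄ ⊗ x ⊗ k̄ − k̄ ⊗ x ⊗ f̄ + f̄ ⊗ k̄ ⊗ x − k̄ ⊗ f̄ ⊗ x)` cancel after rotation.
Since `r` is symmetric, `s̄_i ⊗ 1 ⊗ t̄_i` and `s̄_i ⊗ t̄_i ⊗ 1` are both rotations of `1 ⊗ r̄`,
so the cyclic sum of `P` is `(γ + 2)` times the cyclic sum of `1 ⊗ r̄` when `c = γ·1`, and the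
latter is nonzero.
-/

abbrev V3 := V ⊗[ℂ] (V ⊗[ℂ] V)

lemma f0_zero : f0 0 = 0 := rfl

lemma f0_neg (p : Polynomial ℂ) : f0 (-p) = -f0 p := by
  simp [f0]

lemma f0_smul (γ : ℂ) (p : Polynomial ℂ) : f0 (γ • p) = γ • f0 p := by
  simp [f0, Prod.smul_def]

lemma w_on_basis :
    w kMat eMat = X ∧ w eMat kMat = -X ∧ w fMat eMat = 0 ∧ w fMat fMat = 0 ∧ w fMat kMat = 0 ∧
    w eMat eMat = 0 ∧ w eMat fMat = 0 ∧ w kMat fMat = 0 ∧ w kMat kMat = 0 := by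
  simp [w, eMat, fMat, kMat]

lemma sum_co_smul_swap {M : Type*} [AddCommGroup M] [Module ℂ M]
    (F : Matrix (Fin 2) (Fin 2) ℂ → Matrix (Fin 2) (Fin 2) ℂ → M) :
    ∑ i, co i • F (t i) (s i) = ∑ i, co i • F (s i) (t i) := by
  simp only [Fin.sum_univ_three, co, s, t, Matrix.cons_val_zero, Matrix.cons_val_one,
    Matrix.cons_val_two, Matrix.head_cons, Matrix.tail_cons, one_smul]
  abel

noncomputable def cyclicSum (F : (V → V → V → V3) → V3) : V3 :=
  F (fun a b d => a ⊗ₜ[ℂ] (b ⊗ₜ[ℂ] d)) + F (fun a b d => d ⊗ₜ[ℂ] (a ⊗ₜ[ℂ] b))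
    + F (fun a b d => b ⊗ₜ[ℂ] (d ⊗ₜ[ℂ] a))

lemma cyclicSum_rotate (F : (V → V → V → V3) → V3) :
    cyclicSum (fun ins => F (fun a b d => ins b d a)) = cyclicSum F := by
  simp only [cyclicSum]
  abel

noncomputable def omegaTerms (ins : V → V → V → V3) : V3 :=
  ∑ i : Fin 3, ∑ j : Fin 3, (co i * co j) •
      (- ins (gbar (s i)) (f0 (w (s j) (t i))) (gbar (t j))
       - ins (gbar (s i)) (gbar (s j)) (f0 (w (t j) (t i))))

noncomputable def rTerms (p : Polynomial ℂ) (ins : V → V → V → V3) : V3 :=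
  ∑ i : Fin 3, co i • ins (f0 p) (gbar (s i)) (gbar (t i))

lemma P_eq_omegaTerms_add_rTerms (c : Polynomial ℂ) (ins : V → V → V → V3) :
    P c ins = omegaTerms ins + rTerms 1 (fun a b d => ins d a b)
      + rTerms 1 (fun a b d => ins b d a) + rTerms c ins := by
  have hswap := sum_co_smul_swap (fun A B => ins (gbar A) (f0 1) (gbar B))
  simp only [P, omegaTerms, rTerms, Finset.sum_add_distrib, smul_add, hswap]
  abel

lemma cyclicSum_P (c : Polynomial ℂ) :
    cyclicSum (P c) =
      cyclicSum omegaTerms + (2 : ℂ) • cyclicSum (rTerms 1) + cyclicSum (rTerms c) := by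
  have h₁ := cyclicSum_rotate (rTerms 1)
  have h₂ := cyclicSum_rotate (fun ins => rTerms 1 (fun a b d => ins b d a))
  simp only [cyclicSum, P_eq_omegaTerms_add_rTerms] at h₁ h₂ ⊢
  linear_combination (norm := module) h₁ + h₂

lemma cyclicSum_omegaTerms : cyclicSum omegaTerms = 0 := by
  obtain ⟨h₁, h₂, h₃, h₄, h₅, h₆, h₇, h₈, h₉⟩ := w_on_basis
  simp only [cyclicSum, omegaTerms, Fin.sum_univ_three, s, t, co, Matrix.cons_val_zero,
    Matrix.cons_val_one, Matrix.cons_val_two, Matrix.head_cons, Matrix.tail_cons,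
    h₁, h₂, h₃, h₄, h₅, h₆, h₇, h₈, h₉, f0_neg, f0_zero, TensorProduct.tmul_zero,
    TensorProduct.zero_tmul, TensorProduct.tmul_neg, TensorProduct.neg_tmul]
  module

lemma cyclicSum_rTerms_C (γ : ℂ) : cyclicSum (rTerms (C γ)) = γ • cyclicSum (rTerms 1) := by
  have hC : f0 (C γ) = γ • f0 1 := by rw [← f0_smul, smul_eq_C_mul, mul_one]
  simp only [cyclicSum, rTerms, hC, ← TensorProduct.smul_tmul', TensorProduct.tmul_smul,
    Finset.smul_sum, smul_comm γ, smul_add]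

lemma cyclicSum_rTerms_one_ne_zero : cyclicSum (rTerms 1) ≠ 0 := by
  let entry (i j : Fin 2) : V →ₗ[ℂ] ℂ :=
    Matrix.entryLinearMap ℂ ℂ i j ∘ₗ LinearMap.snd ℂ _ _ ∘ₗ LinearMap.snd ℂ _ _
  -- `Φ` reads off the coefficient of `1 ⊗ ē ⊗ f̄`, which is `-1`.
  let Φ : V3 →ₗ[ℂ] ℂ := LinearMap.mul' ℂ ℂ ∘ₗ TensorProduct.map
    (Polynomial.lcoeff ℂ 0 ∘ₗ LinearMap.fst ℂ _ _)
    (LinearMap.mul' ℂ ℂ ∘ₗ TensorProduct.map (entry 1 0) (entry 0 1))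
  intro h
  have hΦ := congrArg Φ h
  simp [Φ, entry, cyclicSum, rTerms, Fin.sum_univ_three, s, t, co, f0, gbar, eMat, fMat,
    kMat] at hΦ

/-- `P₁₂₃ + P₂₃₁ + P₃₁₂ = 0` (sum over cyclic permutations of the tensor
slots) if and only if `c = −2·1`, for `c ∈ ℂ·1 ⊂ F₀`. -/
theorem coherence_iff_c_eq_neg_two (c : Polynomial ℂ) (hc : ∃ γ : ℂ, c = C γ) :
    (P c (fun a b d => a ⊗ₜ[ℂ] (b ⊗ₜ[ℂ] d))
      + P c (fun a b d => d ⊗ₜ[ℂ] (a ⊗ₜ[ℂ] b))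
      + P c (fun a b d => b ⊗ₜ[ℂ] (d ⊗ₜ[ℂ] a)) = 0)
      ↔ c = C (-2) := by
  obtain ⟨γ, rfl⟩ := hc
  have hsum : cyclicSum (P (C γ)) = (γ + 2) • cyclicSum (rTerms 1) := by
    rw [cyclicSum_P, cyclicSum_omegaTerms, cyclicSum_rTerms_C]
    module
  change cyclicSum (P (C γ)) = 0 ↔ _
  rw [hsum, smul_eq_zero_iff_left cyclicSum_rTerms_one_ne_zero, C_inj, add_eq_zero_iff_eq_neg]

end Stmt19
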